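/- If the distributed greedy algorithm terminates after round t (i.e., O_{t+1} ∪ H_{t+1} = ∅), then M_{t+1} = L_C: the distributed greedy algorithm and the centralized greedy algorithm schedule exactly the same set of links. -/

import Mathlib

open Classical

/-- Link distance `d(l_u,l_v)`: minimum graph distance between endpoints of the two links. -/
noncomputable def linkDist {V : Type*} (G : SimpleGraph V) (lu lv : V × V) : ℕ :=
  min (min (G.dist lu.1 lv.1) (G.dist lu.1 lv.2))
      (min (G.dist lu.2 lv.1) (G.dist lu.2 lv.2))

/-- A wireless network: a connected simple graph `G` on the node set `V`, a finite set `L`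
of directed links between adjacent nodes, an interference parameter `K ≥ 1`, and
pairwise distinct link prices `lam`. -/
structure Net (V : Type*) where
  G : SimpleGraph V
  conn : G.Connected
  L : Set (V × V)
  Lfin : L.Finite
  adj : ∀ l ∈ L, G.Adj l.1 l.2
  K : ℕ
  hK : 1 ≤ K
  lam : V × V → ℝ
  distinct : ∀ l ∈ L, ∀ l' ∈ L, l ≠ l' → lam l ≠ lam l'

/-- `W` is a `K`-valid matching: distinct links of `W` are at link distance `≥ K`. -/
def KValid {V : Type*} (N : Net V) (W : Set (V × V)) : Prop :=
  ∀ l ∈ W, ∀ l' ∈ W, l ≠ l' → N.K ≤ linkDist N.G l l'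

/-- State of the distributed algorithm: the OPEN, CHECK, MARKED and CLOSED links. -/
structure St (V : Type*) where
  O : Set (V × V)
  H : Set (V × V)
  M : Set (V × V)
  C : Set (V × V)

/-- The OPEN attached links of node `n` (OPEN links whose source is `n`). -/
def openAt {V : Type*} (s : St V) (n : V) : Set (V × V) :=
  {l ∈ s.O | l.1 = n}

/-- `a` selects, at every node `n` having an OPEN attached link, the highest-priced
OPEN attached link `a n` of `n`. -/
def IsSelector {V : Type*} (N : Net V) (s : St V) (a : V → V × V) : Prop :=
  ∀ n, (openAt s n).Nonempty →
    a n ∈ openAt s n ∧ ∀ l ∈ openAt s n, N.lam l ≤ N.lam (a n)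

/-- `R(n)`: the highest-priced OPEN attached links `a n'` of the other nodes `n'` within
`K+1` hops of `n` that have an OPEN attached link. -/
def Rset {V : Type*} (N : Net V) (s : St V) (a : V → V × V) (n : V) : Set (V × V) :=
  {l' | ∃ n', n' ≠ n ∧ N.G.dist n n' ≤ N.K + 1 ∧ (openAt s n').Nonempty ∧ l' = a n'}

/-- Node `n` marks its highest-priced OPEN attached link `a n`: `n` has an OPEN attached
link, and either `R(n) = ∅` or `a n` beats every received price (this disjunction is
expressed by the universally quantified inequality). -/
def MarkCond {V : Type*} (N : Net V) (s : St V) (a : V → V × V) (n : V) : Prop :=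
  (openAt s n).Nonempty ∧ ∀ l' ∈ Rset N s a n, N.lam l' < N.lam (a n)

/-- One round of the distributed greedy algorithm, transforming state `s` into `s'`.
Phase 1: each node `n` with an OPEN attached link either marks `a n` and closes its other
OPEN attached links (when `MarkCond` holds), or moves to CHECK each OPEN attached link
that is interfered with by a strictly higher-priced received link, the rest staying OPEN.
Phase 2: the marked links are added to the MARKED set; every CHECK link interfering with
some MARKED link is closed; then at each node the highest-priced attached link still in
CHECK (if any) becomes OPEN again. -/
def Step {V : Type*} (N : Net V) (s s' : St V) : Prop :=
  ∃ a : V → V × V, IsSelector N s a ∧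
    (let newMarked : Set (V × V) := {l | ∃ n, MarkCond N s a n ∧ l = a n}
     let closed1 : Set (V × V) := {l ∈ s.O | MarkCond N s a l.1 ∧ l ≠ a l.1}
     let newCheck : Set (V × V) :=
       {l ∈ s.O | ¬ MarkCond N s a l.1 ∧
         ∃ l' ∈ Rset N s a l.1, N.lam l < N.lam l' ∧ linkDist N.G l l' < N.K}
     let M' : Set (V × V) := s.M ∪ newMarked
     let pool : Set (V × V) := s.H ∪ newCheck
     let closed2 : Set (V × V) := {l ∈ pool | ∃ j ∈ M', linkDist N.G l j < N.K}
     let rem : Set (V × V) := pool \ closed2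
     let reopened : Set (V × V) := {l ∈ rem | ∀ l' ∈ rem, l'.1 = l.1 → N.lam l' ≤ N.lam l}
     s'.O = (s.O \ (newMarked ∪ closed1 ∪ newCheck)) ∪ reopened ∧
     s'.H = rem \ reopened ∧
     s'.M = M' ∧
     s'.C = s.C ∪ closed1 ∪ closed2)

/-- A trajectory of the distributed greedy algorithm, rounds indexed from `1`:
initially every link of `L` is OPEN, and each round `m ≥ 1` performs one `Step`. -/
def IsTrajectory {V : Type*} (N : Net V) (O H M C : ℕ → Set (V × V)) : Prop :=
  O 1 = N.L ∧ H 1 = ∅ ∧ M 1 = ∅ ∧ C 1 = ∅ ∧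
    ∀ m, 1 ≤ m → Step N ⟨O m, H m, M m, C m⟩ ⟨O (m+1), H (m+1), M (m+1), C (m+1)⟩

/-- Process a list of links in order, starting from `W`, adding a link whenever the
result is still a `K`-valid matching.  Applied to the listing of `L` in strictly
decreasing order of price, this computes the centralized greedy schedule `L_C`. -/
noncomputable def greedyList {V : Type*} (N : Net V) :
    List (V × V) → Set (V × V) → Set (V × V)
  | [], W => W
  | l :: ls, W => greedyList N ls (if KValid N (insert l W) then insert l W else W)

/-!
The run keeps an invariant relative to `L_C`: MARKED links lie in `L_C`, CLOSED links avoid it,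
no OPEN or CHECK link interferes with a MARKED one, and every CHECK link is outpriced by an OPEN
link at its source, so the best OPEN link `a n` of a node dominates every unfinished link at `n`.
Interfering links have sources at most `K + 1` hops apart; hence when `n` marks `a n`, every
unfinished link interfering with it is cheaper, no more expensive link of `L_C` interferes with
it, and the greedy rule puts `a n` in `L_C`. At termination every link is MARKED or CLOSED.
-/

section

variable {V : Type*}

lemma linkDist_comm (G : SimpleGraph V) (l j : V × V) :
    linkDist G l j = linkDist G j l := by
  have := G.dist_comm (u := l.1) (v := j.1)
  have := G.dist_comm (u := l.1) (v := j.2)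
  have := G.dist_comm (u := l.2) (v := j.1)
  have := G.dist_comm (u := l.2) (v := j.2)
  unfold linkDist
  omega

lemma linkDist_eq_zero_of_fst_eq {G : SimpleGraph V} {l j : V × V} (h : l.1 = j.1) :
    linkDist G l j = 0 := by
  have : linkDist G l j ≤ G.dist l.1 j.1 := by unfold linkDist; omega
  rw [h, SimpleGraph.dist_self] at this
  omega

lemma SimpleGraph.Connected.dist_fst_le_linkDist_add_two {G : SimpleGraph V}
    (hG : G.Connected) {l l' : V × V} (hl : G.Adj l.1 l.2) (hl' : G.Adj l'.1 l'.2) :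
    G.dist l.1 l'.1 ≤ linkDist G l l' + 2 := by
  have h₁ : G.dist l.1 l.2 = 1 := SimpleGraph.dist_eq_one_iff_adj.mpr hl
  have h₂ : G.dist l'.2 l'.1 = 1 := SimpleGraph.dist_eq_one_iff_adj.mpr hl'.symm
  have := hG.dist_triangle (u := l.1) (v := l.2) (w := l'.1)
  have := hG.dist_triangle (u := l.2) (v := l'.2) (w := l'.1)
  have := hG.dist_triangle (u := l.1) (v := l'.2) (w := l'.1)
  unfold linkDist
  omega

lemma Set.Finite.exists_fiberwise_max {α β γ : Type*} [LinearOrder γ] {S : Set α}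
    (hS : S.Finite) (g : α → β) (f : α → γ) {x : α} (hx : x ∈ S) :
    ∃ w ∈ S, (∀ y ∈ S, g y = g w → f y ≤ f w) ∧ g w = g x ∧ f x ≤ f w := by
  obtain ⟨w, ⟨hwS, hw⟩, hmax⟩ :=
    Set.exists_max_image {y ∈ S | g y = g x} f (hS.subset (Set.sep_subset _ _)) ⟨x, hx, rfl⟩
  exact ⟨w, hwS, fun y hy hyw => hmax y ⟨hy, hyw.trans hw⟩, hw, hmax x ⟨hx, rfl⟩⟩

section Greedy

variable {N : Net V}

lemma KValid.eq_of_linkDist_lt {W : Set (V × V)} (hW : KValid N W) {l j : V × V}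
    (hl : l ∈ W) (hj : j ∈ W) (hd : linkDist N.G l j < N.K) : l = j := by
  by_contra hne
  exact (hW l hl j hj hne).not_gt hd

lemma KValid.insert {W : Set (V × V)} (hW : KValid N W) {x : V × V}
    (hx : ∀ w ∈ W, w ≠ x → N.K ≤ linkDist N.G x w) : KValid N (insert x W) := by
  rintro u (rfl | hu) v (rfl | hv) huv
  · exact absurd rfl huv
  · exact hx v hv huv.symm
  · rw [linkDist_comm]
    exact hx u hu huv
  · exact hW u hu v hv huv

variable (N)

lemma subset_greedyList : ∀ (ls : List (V × V)) (W : Set (V × V)), W ⊆ greedyList N ls W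
  | [], _ => subset_rfl
  | x :: ls, W => by
    refine subset_trans ?_ (subset_greedyList ls _)
    split_ifs
    exacts [Set.subset_insert x W, subset_rfl]

lemma greedyList_subset :
    ∀ (ls : List (V × V)) (W : Set (V × V)), greedyList N ls W ⊆ W ∪ {l | l ∈ ls}
  | [], _ => Set.subset_union_left
  | x :: ls, W => by
    intro l hl
    rcases greedyList_subset ls _ hl with h | h
    · split_ifs at h
      · rcases h with rfl | h
        exacts [Or.inr List.mem_cons_self, Or.inl h]
      · exact Or.inl h
    · exact Or.inr (List.mem_cons_of_mem x h)

lemma kValid_greedyList :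
    ∀ (ls : List (V × V)) {W : Set (V × V)}, KValid N W → KValid N (greedyList N ls W)
  | [], _, hW => hW
  | x :: ls, W, hW => by
    refine kValid_greedyList ls ?_
    split_ifs with h
    exacts [h, hW]

lemma mem_greedyList_of_forall_le_linkDist :
    ∀ {ls : List (V × V)} {W : Set (V × V)} {l : V × V},
      ls.Pairwise (fun a b => N.lam b < N.lam a) → KValid N W →
      (∀ w ∈ W, ∀ y ∈ ls, N.lam y < N.lam w) → l ∈ ls →
      (∀ j ∈ greedyList N ls W, N.lam l < N.lam j → N.K ≤ linkDist N.G l j) →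
      l ∈ greedyList N ls W
  | x :: ls, W, l, hsort, hW, hWls, hl, hfar => by
    obtain ⟨hx, hsort⟩ := List.pairwise_cons.mp hsort
    rcases List.mem_cons.mp hl with rfl | hl
    · have hvalid : KValid N (insert l W) := hW.insert fun w hw _ =>
        hfar w (subset_greedyList N _ W hw) (hWls w hw l List.mem_cons_self)
      show l ∈ greedyList N ls _
      rw [if_pos hvalid]
      exact subset_greedyList N ls _ (Set.mem_insert l W)
    · show l ∈ greedyList N ls _
      refine mem_greedyList_of_forall_le_linkDist (ls := ls) hsort ?_ ?_ hl hfar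
      · split_ifs with h
        exacts [h, hW]
      · intro w hw y hy
        have hw' : w ∈ insert x W := by
          split_ifs at hw
          exacts [hw, Set.mem_insert_of_mem x hw]
        rcases hw' with rfl | hw'
        exacts [hx y hy, hWls w hw' y (List.mem_cons_of_mem _ hy)]

structure IsGreedyMatching (W : Set (V × V)) : Prop where
  subset : W ⊆ N.L
  valid : KValid N W
  mem_of_forall_le_linkDist : ∀ l ∈ N.L,
    (∀ j ∈ W, N.lam l < N.lam j → N.K ≤ linkDist N.G l j) → l ∈ W

variable {N}

lemma isGreedyMatching_greedyList {lst : List (V × V)} (hmem : ∀ l, l ∈ lst ↔ l ∈ N.L)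
    (hsort : lst.Pairwise (fun a b => N.lam b < N.lam a)) :
    IsGreedyMatching N (greedyList N lst ∅) where
  subset l hl := by
    rcases greedyList_subset N lst ∅ hl with h | h
    exacts [(Set.notMem_empty l h).elim, (hmem l).mp h]
  valid := kValid_greedyList N lst fun l hl => (Set.notMem_empty l hl).elim
  mem_of_forall_le_linkDist l hl hfar :=
    mem_greedyList_of_forall_le_linkDist N hsort (fun l hl => (Set.notMem_empty l hl).elim)
      (fun w hw => (Set.notMem_empty w hw).elim) ((hmem l).mpr hl) hfar

end Greedy

namespace Step

variable (N : Net V) (s : St V) (a : V → V × V)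

def newMarked : Set (V × V) := {l | ∃ n, MarkCond N s a n ∧ l = a n}

def closedAtMark : Set (V × V) := {l ∈ s.O | MarkCond N s a l.1 ∧ l ≠ a l.1}

def newCheck : Set (V × V) :=
  {l ∈ s.O | ¬ MarkCond N s a l.1 ∧
    ∃ l' ∈ Rset N s a l.1, N.lam l < N.lam l' ∧ linkDist N.G l l' < N.K}

def pool : Set (V × V) := s.H ∪ newCheck N s a

def closedByMarked : Set (V × V) :=
  {l ∈ pool N s a | ∃ j ∈ s.M ∪ newMarked N s a, linkDist N.G l j < N.K}

def remaining : Set (V × V) := pool N s a \ closedByMarked N s a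

def reopened : Set (V × V) :=
  {l ∈ remaining N s a | ∀ l' ∈ remaining N s a, l'.1 = l.1 → N.lam l' ≤ N.lam l}

lemma pool_subset : pool N s a ⊆ s.O ∪ s.H :=
  Set.union_subset Set.subset_union_right fun _ h => Or.inl h.1

variable {N s}

lemma exists_selector {s' : St V} (h : Step N s s') :
    ∃ a, IsSelector N s a ∧
      s'.O = (s.O \ (newMarked N s a ∪ closedAtMark N s a ∪ newCheck N s a)) ∪
        reopened N s a ∧
      s'.H = remaining N s a \ reopened N s a ∧
      s'.M = s.M ∪ newMarked N s a ∧
      s'.C = s.C ∪ closedAtMark N s a ∪ closedByMarked N s a :=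
  h

end Step

namespace St

structure Invariant (N : Net V) (LC : Set (V × V)) (s : St V) : Prop where
  active_subset : s.O ∪ s.H ⊆ N.L
  subset_union : N.L ⊆ s.O ∪ s.H ∪ s.M ∪ s.C
  le_linkDist : ∀ l ∈ s.O ∪ s.H, ∀ j ∈ s.M, N.K ≤ linkDist N.G l j
  exists_open_of_check : ∀ l ∈ s.H, ∃ w ∈ s.O, w.1 = l.1 ∧ N.lam l < N.lam w
  marked_subset : s.M ⊆ LC
  disjoint_closed : Disjoint s.C LC

namespace Invariant

variable {N : Net V} {LC : Set (V × V)}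

lemma init : Invariant N LC ⟨N.L, ∅, ∅, ∅⟩ where
  active_subset := by simp
  subset_union _ hl := Or.inl (Or.inl (Or.inl hl))
  le_linkDist _ _ j hj := (Set.notMem_empty j hj).elim
  exists_open_of_check l hl := (Set.notMem_empty l hl).elim
  marked_subset := Set.empty_subset LC
  disjoint_closed := Set.empty_disjoint LC

variable {s : St V} {a : V → V × V} {n : V} {l : V × V}

lemma lam_le_selector (hinv : Invariant N LC s) (hsel : IsSelector N s a)
    (hl : l ∈ s.O ∪ s.H) : (openAt s l.1).Nonempty ∧ N.lam l ≤ N.lam (a l.1) := by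
  rcases hl with hl | hl
  · exact ⟨⟨l, hl, rfl⟩, (hsel l.1 ⟨l, hl, rfl⟩).2 l ⟨hl, rfl⟩⟩
  · obtain ⟨w, hw, hw1, hlw⟩ := hinv.exists_open_of_check l hl
    have hne : (openAt s l.1).Nonempty := ⟨w, hw, hw1⟩
    exact ⟨hne, hlw.le.trans ((hsel l.1 hne).2 w ⟨hw, hw1⟩)⟩

lemma lam_le_of_linkDist_lt (hinv : Invariant N LC s) (hsel : IsSelector N s a)
    (hn : MarkCond N s a n) (hl : l ∈ s.O ∪ s.H) (hd : linkDist N.G l (a n) < N.K) :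
    N.lam l ≤ N.lam (a n) := by
  obtain ⟨hne, hle⟩ := hinv.lam_le_selector hsel hl
  obtain ⟨ha, ha1⟩ := (hsel n hn.1).1
  by_cases h : l.1 = n
  · rwa [h] at hle
  · have hclose : N.G.dist n l.1 ≤ N.K + 1 := by
      have := N.conn.dist_fst_le_linkDist_add_two (N.adj _ (hinv.active_subset (Or.inl ha)))
        (N.adj l (hinv.active_subset hl))
      rw [ha1, linkDist_comm] at this
      omega
    exact hle.trans (hn.2 _ ⟨l.1, h, hclose, hne, rfl⟩).le

lemma ne_selector_of_mem_pool (hinv : Invariant N LC s) (hsel : IsSelector N s a)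
    (hn : MarkCond N s a n) (hl : l ∈ Step.pool N s a) : l ≠ a n := by
  rintro rfl
  have ha1 : (a n).1 = n := (hsel n hn.1).1.2
  rcases hl with hl | hl
  · obtain ⟨w, hw, hw1, hlw⟩ := hinv.exists_open_of_check _ hl
    rw [ha1] at hw1
    exact lt_irrefl _ (hlw.trans_le ((hsel n hn.1).2 w ⟨hw, hw1⟩))
  · exact hl.2.1 (by rwa [ha1])

lemma newMarked_subset (hinv : Invariant N LC s) (hsel : IsSelector N s a)
    (hLC : IsGreedyMatching N LC) : Step.newMarked N s a ⊆ LC := by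
  rintro _ ⟨n, hn, rfl⟩
  have ha : a n ∈ s.O := (hsel n hn.1).1.1
  refine hLC.mem_of_forall_le_linkDist _ (hinv.active_subset (Or.inl ha)) fun j hj hlt => ?_
  by_contra! hd
  rcases hinv.subset_union (hLC.subset hj) with (hj' | hj') | hj'
  · rw [linkDist_comm] at hd
    exact hlt.not_ge (hinv.lam_le_of_linkDist_lt hsel hn hj' hd)
  · exact hd.not_ge (hinv.le_linkDist (a n) (Or.inl ha) j hj')
  · exact Set.disjoint_left.mp hinv.disjoint_closed hj' hj

lemma mem_phaseOne_of_linkDist_lt (hinv : Invariant N LC s) (hsel : IsSelector N s a)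
    (hn : MarkCond N s a n) (hl : l ∈ s.O) (hd : linkDist N.G l (a n) < N.K) :
    l ∈ Step.newMarked N s a ∪ Step.closedAtMark N s a ∪ Step.newCheck N s a := by
  obtain ⟨ha, ha1⟩ := (hsel n hn.1).1
  by_cases hla : l = a n
  · exact Or.inl (Or.inl ⟨n, hn, hla⟩)
  have hlt : N.lam l < N.lam (a n) :=
    (hinv.lam_le_of_linkDist_lt hsel hn (Or.inl hl) hd).lt_of_ne <|
      N.distinct _ (hinv.active_subset (Or.inl hl)) _ (hinv.active_subset (Or.inl ha)) hla
  by_cases hm : MarkCond N s a l.1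
  · by_cases hl1 : l = a l.1
    · exact Or.inl (Or.inl ⟨l.1, hm, hl1⟩)
    · exact Or.inl (Or.inr ⟨hl, hm, hl1⟩)
  · have hclose : N.G.dist l.1 n ≤ N.K + 1 := by
      have := N.conn.dist_fst_le_linkDist_add_two (N.adj l (hinv.active_subset (Or.inl hl)))
        (N.adj _ (hinv.active_subset (Or.inl ha)))
      rw [ha1] at this
      omega
    exact Or.inr ⟨hl, hm, a n, ⟨n, fun h => hm (h ▸ hn), hclose, hn.1, rfl⟩, hlt, hd⟩

lemma le_linkDist_step (hinv : Invariant N LC s) (hsel : IsSelector N s a) :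
    ∀ l ∈ (s.O \ (Step.newMarked N s a ∪ Step.closedAtMark N s a ∪ Step.newCheck N s a) ∪
        Step.reopened N s a) ∪ (Step.remaining N s a \ Step.reopened N s a),
      ∀ j ∈ s.M ∪ Step.newMarked N s a, N.K ≤ linkDist N.G l j := by
  have hrem : ∀ l ∈ Step.remaining N s a, ∀ j ∈ s.M ∪ Step.newMarked N s a,
      N.K ≤ linkDist N.G l j :=
    fun l hl j hj => not_lt.mp fun hd => hl.2 ⟨hl.1, j, hj, hd⟩
  rintro l ((⟨hl, hleft⟩ | hl) | hl) j hj
  · rcases hj with hj | ⟨n, hn, rfl⟩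
    · exact hinv.le_linkDist l (Or.inl hl) j hj
    · exact not_lt.mp fun hd => hleft (hinv.mem_phaseOne_of_linkDist_lt hsel hn hl hd)
  exacts [hrem l hl.1 j hj, hrem l hl.1 j hj]

lemma disjoint_newClosed (hinv : Invariant N LC s) (hsel : IsSelector N s a)
    (hLC : IsGreedyMatching N LC) :
    Disjoint (Step.closedAtMark N s a ∪ Step.closedByMarked N s a) LC := by
  have hmarked : Step.newMarked N s a ⊆ LC := hinv.newMarked_subset hsel hLC
  rw [Set.disjoint_left]
  rintro l (⟨-, hm, hne⟩ | ⟨hl, j, hj, hd⟩) hlLC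
  · have ha1 : (a l.1).1 = l.1 := (hsel l.1 hm.1).1.2
    refine hne (hLC.valid.eq_of_linkDist_lt hlLC (hmarked ⟨l.1, hm, rfl⟩) ?_)
    rw [linkDist_eq_zero_of_fst_eq ha1.symm]
    exact N.hK
  · rcases hj with hj | ⟨n, hn, rfl⟩
    · exact hd.not_ge (hinv.le_linkDist l (Step.pool_subset N s a hl) j hj)
    · exact hinv.ne_selector_of_mem_pool hsel hn hl
        (hLC.valid.eq_of_linkDist_lt hlLC (hmarked ⟨n, hn, rfl⟩) hd)

lemma step (hinv : Invariant N LC s) (hLC : IsGreedyMatching N LC) {s' : St V}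
    (hstep : Step N s s') : Invariant N LC s' := by
  obtain ⟨a, hsel, hO, hH, hM, hC⟩ := Step.exists_selector hstep
  have hpool : Step.pool N s a ⊆ N.L := (Step.pool_subset N s a).trans hinv.active_subset
  have hmarked : s.M ∪ Step.newMarked N s a ⊆ LC :=
    Set.union_subset hinv.marked_subset (hinv.newMarked_subset hsel hLC)
  refine ⟨?active, ?cover, ?far, ?check, hM ▸ hmarked, ?closed⟩
  case active =>
    rw [hO, hH]
    rintro l ((⟨hl, -⟩ | hl) | ⟨hl, -⟩)
    exacts [hinv.active_subset (Or.inl hl), hpool hl.1.1, hpool hl.1]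
  case cover =>
    rw [hO, hH, hM, hC]
    intro l hl
    have := hinv.subset_union hl
    simp only [Step.remaining, Step.pool, Set.mem_union, Set.mem_sdiff] at this ⊢
    tauto
  case far =>
    rw [hO, hH, hM]
    exact hinv.le_linkDist_step hsel
  case check =>
    rw [hH, hO]
    rintro l ⟨hl, hnot⟩
    have hfin : (Step.remaining N s a).Finite := N.Lfin.subset fun x hx => hpool hx.1
    obtain ⟨w, hwS, hwmax, hw1, hlw⟩ := hfin.exists_fiberwise_max Prod.fst N.lam hl
    refine ⟨w, Or.inr ⟨hwS, hwmax⟩, hw1, hlw.lt_of_ne ?_⟩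
    exact N.distinct l (hpool hl.1) w (hpool hwS.1) fun h => hnot (h ▸ ⟨hwS, hwmax⟩)
  case closed =>
    rw [hC, Set.union_assoc]
    exact Set.disjoint_union_left.mpr ⟨hinv.disjoint_closed, hinv.disjoint_newClosed hsel hLC⟩

lemma marked_eq (hinv : Invariant N LC s) (hLC : IsGreedyMatching N LC)
    (hterm : s.O ∪ s.H = ∅) : s.M = LC := by
  refine hinv.marked_subset.antisymm fun l hl => ?_
  rcases hinv.subset_union (hLC.subset hl) with (h | h) | h
  · exact absurd (hterm ▸ h) (Set.notMem_empty l)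
  · exact h
  · exact absurd hl (Set.disjoint_left.mp hinv.disjoint_closed h)

end Invariant

end St

end

theorem stmt13_distributed_equals_centralized_general {V : Type*} (N : Net V)
    (O H M C : ℕ → Set (V × V)) (htraj : IsTrajectory N O H M C)
    (lst : List (V × V)) (hmem : ∀ l, l ∈ lst ↔ l ∈ N.L)
    (hsort : lst.Pairwise (fun a b => N.lam b < N.lam a))
    (t : ℕ) (hterm : O (t + 1) ∪ H (t + 1) = ∅) :
    M (t + 1) = greedyList N lst ∅ := by
  obtain ⟨hO, hH, hM, hC, hstep⟩ := htraj
  have hLC := isGreedyMatching_greedyList hmem hsort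
  have hinv : ∀ m, 1 ≤ m →
      St.Invariant N (greedyList N lst ∅) ⟨O m, H m, M m, C m⟩ := by
    intro m hm
    induction m, hm using Nat.le_induction with
    | base =>
      rw [hO, hH, hM, hC]
      exact St.Invariant.init
    | succ m hm ih => exact ih.step hLC (hstep m hm)
  exact (hinv (t + 1) t.succ_pos).marked_eq hLC hterm

/-- if the distributed greedy algorithm terminates after round `t`, then
it schedules exactly the links of the centralized greedy schedule: `M (t+1) = L_C`. -/
theorem stmt13_distributed_equals_centralized {V : Type*} [Fintype V] (N : Net V)
    (O H M C : ℕ → Set (V × V)) (htraj : IsTrajectory N O H M C)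
    (lst : List (V × V)) (hmem : ∀ l, l ∈ lst ↔ l ∈ N.L)
    (hsort : lst.Pairwise (fun a b => N.lam b < N.lam a))
    (t : ℕ) (ht : 1 ≤ t) (hterm : O (t + 1) ∪ H (t + 1) = ∅) :
    M (t + 1) = greedyList N lst ∅ :=
  stmt13_distributed_equals_centralized_general N O H M C htraj lst hmem hsort t hterm
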